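/- arXiv:math-ph/0504063 — 5 statements merged into one kernel-verified Lean document; each statement's English description precedes it below -/
import Mathlib

section
/- If M ∈ SL(3,ℤ) has characteristic polynomial (x-1)³, then M is conjugate in SL(3,ℤ) to an upper triangular matrix with all diagonal entries 1. -/
/-!
`N = M - 1` is nilpotent, hence singular, so it kills a nonzero integer vector. By Bézout every
integer vector is a multiple of the first column of some determinant one matrix; conjugating by
that matrix makes the first column of `N` vanish. The lower right `2 × 2` block is again
nilpotent, and the same step in `SL(2, ℤ)`, embedded as `diag(1, Q)`, makes `N` upper triangular.
The diagonal of the resulting conjugate of `M` consists of roots of its characteristic polynomial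
`(X - 1)³`, hence of ones.
-/

open Polynomial Matrix

namespace Matrix

variable {R : Type*} [CommRing R]

section Conj

variable {n : Type*} [Fintype n] [DecidableEq n]

theorem det_eq_zero_of_isNilpotent [IsReduced R] [Nonempty n] {A : Matrix n n R}
    (hA : IsNilpotent A) : A.det = 0 := by
  obtain ⟨k, hk⟩ := hA
  exact eq_zero_of_pow_eq_zero (n := k) (by rw [← det_pow, hk, det_zero])

theorem isNilpotent_inv_mul_mul {A P : Matrix n n R} (hP : IsUnit P.det) (hA : IsNilpotent A) :
    IsNilpotent (P⁻¹ * A * P) := by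
  obtain ⟨k, hk⟩ := hA
  refine ⟨k, ?_⟩
  have hconj := Units.conj_pow' (nonsingInvUnit P hP) A k
  change (P⁻¹ * A * P) ^ k = P⁻¹ * A ^ k * P at hconj
  rw [hconj, hk, Matrix.mul_zero, Matrix.zero_mul]

theorem charpoly_inv_mul_mul {A P : Matrix n n R} (hP : IsUnit P.det) :
    (P⁻¹ * A * P).charpoly = A.charpoly := by
  rw [charpoly_mul_comm, ← Matrix.mul_assoc, mul_nonsing_inv _ hP, Matrix.one_mul]

theorem inv_mul_mul_apply_eq_zero_of_mulVec_eq_zero [IsDomain R] {A P : Matrix n n R}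
    {j : n} {g : R} (hg : g ≠ 0) (h : A *ᵥ (P *ᵥ Pi.single j g) = 0) (i : n) :
    (P⁻¹ * A * P) i j = 0 := by
  have hcol : (P⁻¹ * A * P) *ᵥ Pi.single j g = 0 := by
    rw [← mulVec_mulVec, ← mulVec_mulVec, h, mulVec_zero]
  simpa [hg] using congrFun hcol i

theorem exists_det_eq_one_inv_mul_mul_apply_eq_zero [IsDomain R] (j : n)
    (horbit : ∀ v : n → R, ∃ P : Matrix n n R, P.det = 1 ∧ ∃ g, P *ᵥ Pi.single j g = v)
    {A : Matrix n n R} (hA : A.det = 0) :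
    ∃ P : Matrix n n R, P.det = 1 ∧ ∀ i, (P⁻¹ * A * P) i j = 0 := by
  obtain ⟨v, hv, hAv⟩ := exists_mulVec_eq_zero_iff.mpr hA
  obtain ⟨P, hP, g, rfl⟩ := horbit v
  have hg : g ≠ 0 := by
    rintro rfl
    simp at hv
  exact ⟨P, hP, inv_mul_mul_apply_eq_zero_of_mulVec_eq_zero hg hAv⟩

theorem IsUpperTriangular.apply_self_eq_of_charpoly_eq [IsDomain R] [LinearOrder n]
    {A : Matrix n n R} (hA : A.IsUpperTriangular) {a : R} {k : ℕ}
    (h : A.charpoly = (X - C a) ^ k) (i : n) : A i i = a := by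
  have hroot : (A.charpoly).eval (A i i) = 0 := by
    rw [charpoly_of_isUpperTriangular A hA, eval_prod]
    exact Finset.prod_eq_zero (Finset.mem_univ i) (by simp)
  rw [h, eval_pow] at hroot
  exact (by simpa [sub_eq_zero] using hroot : A i i = a ∧ k ≠ 0).1

end Conj

section ExtendOne

variable {n : ℕ}

def extendOne (Q : Matrix (Fin n) (Fin n) R) : Matrix (Fin (n + 1)) (Fin (n + 1)) R :=
  of (vecCons (vecCons 1 0) fun i => vecCons 0 (Q i))

variable (Q : Matrix (Fin n) (Fin n) R)

@[simp] theorem extendOne_zero_zero : extendOne Q 0 0 = 1 := rfl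
@[simp] theorem extendOne_zero_succ (j : Fin n) : extendOne Q 0 j.succ = 0 := rfl
@[simp] theorem extendOne_succ_zero (i : Fin n) : extendOne Q i.succ 0 = 0 := rfl
@[simp] theorem extendOne_succ_succ (i j : Fin n) : extendOne Q i.succ j.succ = Q i j := rfl

@[simp] theorem submatrix_succ_succ_extendOne : (extendOne Q).submatrix Fin.succ Fin.succ = Q :=
  rfl

@[simp] theorem det_extendOne : (extendOne Q).det = Q.det := by
  simp [det_succ_row_zero, Fin.sum_univ_succ]

theorem extendOne_mul_extendOne (Q' : Matrix (Fin n) (Fin n) R) :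
    extendOne Q * extendOne Q' = extendOne (Q * Q') := by
  ext i j
  refine Fin.cases ?_ (fun i => ?_) i <;> refine Fin.cases ?_ (fun j => ?_) j <;>
    simp [mul_apply, Fin.sum_univ_succ]

@[simp] theorem extendOne_one : extendOne (1 : Matrix (Fin n) (Fin n) R) = 1 := by
  ext i j
  refine Fin.cases ?_ (fun i => ?_) i <;> refine Fin.cases ?_ (fun j => ?_) j <;>
    simp [one_apply, Ne.symm (Fin.succ_ne_zero _)]

theorem inv_extendOne {Q : Matrix (Fin n) (Fin n) R} (hQ : IsUnit Q.det) :
    (extendOne Q)⁻¹ = extendOne Q⁻¹ :=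
  inv_eq_left_inv (by rw [extendOne_mul_extendOne, nonsing_inv_mul _ hQ, extendOne_one])

theorem extendOne_mulVec_cons (a : R) (w : Fin n → R) :
    extendOne Q *ᵥ vecCons a w = vecCons a (Q *ᵥ w) := by
  ext i
  refine Fin.cases ?_ (fun i => ?_) i <;> simp [mulVec, dotProduct, Fin.sum_univ_succ]

theorem submatrix_succ_succ_extendOne_mul_mul (Q' : Matrix (Fin n) (Fin n) R)
    (A : Matrix (Fin (n + 1)) (Fin (n + 1)) R) :
    (extendOne Q' * A * extendOne Q).submatrix Fin.succ Fin.succ =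
      Q' * A.submatrix Fin.succ Fin.succ * Q := by
  ext i j
  simp [mul_apply, Fin.sum_univ_succ, Finset.sum_mul]

theorem extendOne_mul_mul_extendOne_apply_zero (Q' : Matrix (Fin n) (Fin n) R)
    {A : Matrix (Fin (n + 1)) (Fin (n + 1)) R} (hA : ∀ i, A i 0 = 0) (i : Fin (n + 1)) :
    (extendOne Q' * A * extendOne Q) i 0 = 0 := by
  simp [mul_apply, Fin.sum_univ_succ, hA]

end ExtendOne

section Succ

variable {n : ℕ} {A : Matrix (Fin (n + 1)) (Fin (n + 1)) R}

theorem submatrix_succ_succ_mul (hA : ∀ i : Fin n, A i.succ 0 = 0)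
    (B : Matrix (Fin (n + 1)) (Fin (n + 1)) R) :
    (A * B).submatrix Fin.succ Fin.succ =
      A.submatrix Fin.succ Fin.succ * B.submatrix Fin.succ Fin.succ := by
  ext i j
  simp [mul_apply, Fin.sum_univ_succ, hA]

theorem isNilpotent_submatrix_succ_succ (hA : ∀ i : Fin n, A i.succ 0 = 0)
    (hnil : IsNilpotent A) : IsNilpotent (A.submatrix Fin.succ Fin.succ) := by
  obtain ⟨k, hk⟩ := hnil
  refine ⟨k, ?_⟩
  have hpow : ∀ m, (A ^ m).submatrix Fin.succ Fin.succ = A.submatrix Fin.succ Fin.succ ^ m := by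
    intro m
    induction m with
    | zero => exact submatrix_one _ (Fin.succ_injective n)
    | succ m ih => rw [pow_succ', pow_succ', submatrix_succ_succ_mul hA, ih]
  rw [← hpow, hk]
  rfl

theorem IsUpperTriangular.of_submatrix_succ_succ (hA : ∀ i : Fin n, A i.succ 0 = 0)
    (hsub : (A.submatrix Fin.succ Fin.succ).IsUpperTriangular) : A.IsUpperTriangular := by
  intro i j hji
  cases i using Fin.cases with
  | zero => exact absurd hji (Fin.not_lt_zero j)
  | succ i =>
    cases j using Fin.cases with
    | zero => exact hA i
    | succ j => exact hsub (Fin.succ_lt_succ_iff.mp hji)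

end Succ

end Matrix

theorem Int.exists_det_eq_one_mulVec_single_eq_fin_two (v : Fin 2 → ℤ) :
    ∃ P : Matrix (Fin 2) (Fin 2) ℤ, P.det = 1 ∧ ∃ g, P *ᵥ Pi.single 0 g = v := by
  rcases (Int.gcd (v 0) (v 1)).eq_zero_or_pos with h0 | hpos
  · rw [Int.gcd_eq_zero_iff] at h0
    refine ⟨1, Matrix.det_one, 0, ?_⟩
    ext i
    fin_cases i <;> simp [h0.1, h0.2]
  · obtain ⟨a, b, hab, ha, hb⟩ := Int.exists_gcd_one hpos
    obtain ⟨x, y, hxy⟩ := Int.isCoprime_iff_gcd_eq_one.mpr hab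
    refine ⟨!![a, -y; b, x], ?_, Int.gcd (v 0) (v 1), ?_⟩
    · rw [Matrix.det_fin_two_of]
      linear_combination hxy
    · ext i
      fin_cases i <;> simp [← ha, ← hb]

theorem Int.exists_det_eq_one_mulVec_single_eq_fin_three (v : Fin 3 → ℤ) :
    ∃ P : Matrix (Fin 3) (Fin 3) ℤ, P.det = 1 ∧ ∃ g, P *ᵥ Pi.single 0 g = v := by
  obtain ⟨Q, hQ, g₁, hQv⟩ := Int.exists_det_eq_one_mulVec_single_eq_fin_two ![v 1, v 2]
  obtain ⟨R, hR, g, hRv⟩ := Int.exists_det_eq_one_mulVec_single_eq_fin_two ![v 0, g₁]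
  have hR₀ : R 0 0 * g = v 0 := by simpa using congrFun hRv 0
  have hR₁ : R 1 0 * g = g₁ := by simpa using congrFun hRv 1
  -- `diag(R, 1)` takes `g • e₀` to `(v 0, g₁, 0)`, which `diag(1, Q)` takes to `v`
  refine ⟨extendOne Q * !![R 0 0, R 0 1, 0; R 1 0, R 1 1, 0; 0, 0, 1], ?_, g, ?_⟩
  · simpa [det_fin_three, det_fin_two, hQ] using hR
  · have hvec : !![R 0 0, R 0 1, 0; R 1 0, R 1 1, 0; 0, 0, 1] *ᵥ Pi.single 0 g =
        vecCons (v 0) (Pi.single 0 g₁) := by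
      ext i
      fin_cases i <;> simp [hR₀, hR₁]
    rw [← mulVec_mulVec, hvec, extendOne_mulVec_cons, hQv]
    ext i
    fin_cases i <;> rfl

theorem Int.exists_det_eq_one_isUpperTriangular_inv_mul_mul_of_isNilpotent
    {N : Matrix (Fin 3) (Fin 3) ℤ} (hN : IsNilpotent N) :
    ∃ S : Matrix (Fin 3) (Fin 3) ℤ, S.det = 1 ∧ (S⁻¹ * N * S).IsUpperTriangular := by
  obtain ⟨P, hP, hPN⟩ := exists_det_eq_one_inv_mul_mul_apply_eq_zero 0
    Int.exists_det_eq_one_mulVec_single_eq_fin_three (det_eq_zero_of_isNilpotent hN)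
  have hPu : IsUnit P.det := by simp [hP]
  set A := P⁻¹ * N * P
  have hB : IsNilpotent (A.submatrix Fin.succ Fin.succ) :=
    isNilpotent_submatrix_succ_succ (fun i => hPN i.succ) (isNilpotent_inv_mul_mul hPu hN)
  obtain ⟨Q, hQ, hQB⟩ := exists_det_eq_one_inv_mul_mul_apply_eq_zero 0
    Int.exists_det_eq_one_mulVec_single_eq_fin_two (det_eq_zero_of_isNilpotent hB)
  have hQu : IsUnit Q.det := by simp [hQ]
  refine ⟨P * extendOne Q, by simp [hP, hQ], ?_⟩
  have hconj :
      (P * extendOne Q)⁻¹ * N * (P * extendOne Q) = extendOne Q⁻¹ * A * extendOne Q := by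
    simp only [A, Matrix.mul_inv_rev, inv_extendOne hQu, Matrix.mul_assoc]
  rw [hconj]
  refine IsUpperTriangular.of_submatrix_succ_succ
    (fun i => extendOne_mul_mul_extendOne_apply_zero _ _ hPN _) ?_
  rw [submatrix_succ_succ_extendOne_mul_mul]
  exact IsUpperTriangular.of_submatrix_succ_succ (fun _ => hQB _) (fun i j h => absurd h (by omega))

theorem sl3_unipotent_conjugate_upper_triangular_general (M : Matrix (Fin 3) (Fin 3) ℤ)
    (h : M.charpoly = (X - 1) ^ 3) :
    ∃ T : Matrix (Fin 3) (Fin 3) ℤ, T.det = 1 ∧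
      (∀ i j : Fin 3, j < i → (T * M * T⁻¹) i j = 0) ∧
      (∀ i : Fin 3, (T * M * T⁻¹) i i = 1) := by
  have hN : IsNilpotent (M - 1) := ⟨3, by simpa [h] using aeval_self_charpoly M⟩
  obtain ⟨S, hS, hSN⟩ := Int.exists_det_eq_one_isUpperTriangular_inv_mul_mul_of_isNilpotent hN
  have hSu : IsUnit S.det := by simp [hS]
  have hconj : S⁻¹ * M * S = S⁻¹ * (M - 1) * S + 1 := by
    conv_lhs => rw [← sub_add_cancel M 1, Matrix.mul_add, Matrix.add_mul, Matrix.mul_one,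
      nonsing_inv_mul _ hSu]
  have htri : (S⁻¹ * M * S).IsUpperTriangular := hconj ▸ hSN.add blockTriangular_one
  refine ⟨S⁻¹, by simp [hS], ?_⟩
  rw [nonsing_inv_nonsing_inv _ hSu]
  exact ⟨htri, htri.apply_self_eq_of_charpoly_eq (k := 3)
    (by rw [charpoly_inv_mul_mul hSu, h, C_1])⟩

theorem sl3_unipotent_conjugate_upper_triangular (M : Matrix (Fin 3) (Fin 3) ℤ)
    (hdet : M.det = 1) (h : M.charpoly = (X - 1) ^ 3) :
    ∃ T : Matrix (Fin 3) (Fin 3) ℤ, T.det = 1 ∧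
      (∀ i j : Fin 3, j < i → (T * M * T⁻¹) i j = 0) ∧
      (∀ i : Fin 3, (T * M * T⁻¹) i i = 1) :=
  sl3_unipotent_conjugate_upper_triangular_general M h
end

section
/- If M ∈ SL(3,ℤ) has eigenvalues 1, -1, -1 (characteristic polynomial (x-1)(x+1)²), then M is conjugate in SL(3,ℤ) to an upper triangular matrix with diagonal (1, -1, -1). -/
/-!
Dividing an integer eigenvector by the gcd of its entries gives a primitive one, and a primitive
vector of `ℤ²` or `ℤ³` is the first column of a matrix of determinant one. Conjugating `M` by such
a matrix built from an eigenvector for `1` leaves a `2 × 2` block with characteristic polynomial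
`(X + 1)²`; the same step inside that block, applied to an eigenvector for `-1`, makes the matrix
upper triangular, and its last diagonal entry is then forced by the characteristic polynomial.
-/

open Polynomial Matrix

namespace Matrix

section OneBlockDiag

variable {R : Type*} [CommRing R] {n : ℕ} (V W : Matrix (Fin n) (Fin n) R) (i j : Fin n)

def oneBlockDiag : Matrix (Fin (n + 1)) (Fin (n + 1)) R :=
  of (Fin.cons (Pi.single 0 1) fun i => Fin.cons 0 (V i))

@[simp] lemma oneBlockDiag_zero_zero : oneBlockDiag V 0 0 = 1 := by simp [oneBlockDiag]

@[simp] lemma oneBlockDiag_zero_succ : oneBlockDiag V 0 j.succ = 0 := by simp [oneBlockDiag]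

@[simp] lemma oneBlockDiag_succ_zero : oneBlockDiag V i.succ 0 = 0 := by simp [oneBlockDiag]

@[simp] lemma oneBlockDiag_succ_succ : oneBlockDiag V i.succ j.succ = V i j := by
  simp [oneBlockDiag]

@[simp] lemma submatrix_succ_oneBlockDiag : (oneBlockDiag V).submatrix Fin.succ Fin.succ = V := by
  ext i j
  simp

@[simp] lemma det_oneBlockDiag : (oneBlockDiag V).det = V.det := by
  simp [det_succ_column_zero, Fin.sum_univ_succ]

lemma oneBlockDiag_mul : oneBlockDiag V * oneBlockDiag W = oneBlockDiag (V * W) := by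
  ext i j
  cases i using Fin.cases <;> cases j using Fin.cases <;> simp [mul_apply, Fin.sum_univ_succ]

lemma oneBlockDiag_one : oneBlockDiag (1 : Matrix (Fin n) (Fin n) R) = 1 := by
  ext i j
  cases i using Fin.cases <;> cases j using Fin.cases <;>
    simp [one_apply, Fin.succ_ne_zero, (Fin.succ_ne_zero _).symm]

lemma inv_oneBlockDiag {V : Matrix (Fin n) (Fin n) R} (hV : IsUnit V.det) :
    (oneBlockDiag V)⁻¹ = oneBlockDiag V⁻¹ :=
  inv_eq_left_inv (by rw [oneBlockDiag_mul, nonsing_inv_mul V hV, oneBlockDiag_one])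

lemma submatrix_succ_oneBlockDiag_mul_mul (A : Matrix (Fin (n + 1)) (Fin (n + 1)) R) :
    (oneBlockDiag W * A * oneBlockDiag V).submatrix Fin.succ Fin.succ =
      W * A.submatrix Fin.succ Fin.succ * V := by
  ext i j
  simp [mul_apply, Fin.sum_univ_succ]

variable {A : Matrix (Fin (n + 1)) (Fin (n + 1)) R} {μ : R}

lemma col_zero_oneBlockDiag_mul_mul (hA : A.col 0 = Pi.single 0 μ) :
    (oneBlockDiag W * A * oneBlockDiag V).col 0 = Pi.single 0 μ := by
  have hA' (i) : A i 0 = (Pi.single 0 μ : Fin (n + 1) → R) i := congrFun hA i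
  ext i
  cases i using Fin.cases <;> simp [mul_apply, Fin.sum_univ_succ, hA']

lemma charpoly_eq_mul_charpoly_submatrix_succ (hA : A.col 0 = Pi.single 0 μ) :
    A.charpoly = (X - C μ) * (A.submatrix Fin.succ Fin.succ).charpoly := by
  have hA' (i) : A i 0 = (Pi.single 0 μ : Fin (n + 1) → R) i := congrFun hA i
  have hsub : A.charmatrix.submatrix Fin.succ Fin.succ =
      (A.submatrix Fin.succ Fin.succ).charmatrix := by
    ext i j
    by_cases h : i = j <;> simp [h]
  rw [charpoly, det_succ_column_zero, Fin.sum_univ_succ]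
  simp [hA', Fin.succ_ne_zero, charpoly, hsub]

lemma isUpperTriangular_of_col_zero (hA : A.col 0 = Pi.single 0 μ)
    (hsub : (A.submatrix Fin.succ Fin.succ).IsUpperTriangular) : A.IsUpperTriangular := by
  intro i j hij
  cases i using Fin.cases with
  | zero => exact absurd hij (Fin.not_lt_zero _)
  | succ i =>
    cases j using Fin.cases with
    | zero => simpa using congrFun hA i.succ
    | succ j => exact hsub (Fin.succ_lt_succ_iff.mp hij)

lemma isUpperTriangular_oneBlockDiag_mul_mul (hA : A.col 0 = Pi.single 0 μ)
    (h : (W * A.submatrix Fin.succ Fin.succ * V).IsUpperTriangular) :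
    (oneBlockDiag W * A * oneBlockDiag V).IsUpperTriangular :=
  isUpperTriangular_of_col_zero (col_zero_oneBlockDiag_mul_mul V W hA)
    (by rwa [submatrix_succ_oneBlockDiag_mul_mul])

end OneBlockDiag

section Conjugation

variable {ι R : Type*} [Fintype ι] [DecidableEq ι] [CommRing R]

lemma charpoly_inv_mul_mul_s9 {U : Matrix ι ι R} (hU : IsUnit U.det) (M : Matrix ι ι R) :
    (U⁻¹ * M * U).charpoly = M.charpoly := by
  rw [charpoly_mul_comm, ← mul_assoc, mul_nonsing_inv U hU, one_mul]

lemma col_inv_mul_mul_of_mulVec_eq {U M : Matrix ι ι R} (hU : IsUnit U.det) {μ : R} {j : ι}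
    (h : M *ᵥ U.col j = μ • U.col j) : (U⁻¹ * M * U).col j = Pi.single j μ := by
  rw [← mulVec_single_one, ← mulVec_mulVec, mulVec_single_one, ← mulVec_mulVec, h, mulVec_smul,
    ← mulVec_single_one, mulVec_mulVec, nonsing_inv_mul U hU, one_mulVec, ← Pi.single_smul,
    smul_eq_mul, mul_one]

lemma exists_det_eq_one_col_zero_fin_two {a b : R} (h : IsCoprime a b) :
    ∃ U : Matrix (Fin 2) (Fin 2) R, U.det = 1 ∧ U.col 0 = ![a, b] := by
  obtain ⟨u, v, huv⟩ := h
  refine ⟨!![a, -v; b, u], ?_, ?_⟩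
  · rw [det_fin_two_of]
    linear_combination huv
  · ext i
    fin_cases i <;> rfl

lemma exists_det_eq_one_col_zero_fin_three {a g b c : R} (hag : IsCoprime a g)
    (hbc : IsCoprime b c) :
    ∃ U : Matrix (Fin 3) (Fin 3) R, U.det = 1 ∧ U.col 0 = ![a, g * b, g * c] := by
  obtain ⟨r, s, hrs⟩ := hag
  obtain ⟨p, q, hpq⟩ := hbc
  -- the determinant expands to `(r * a + s * g) * (p * b + q * c)`
  refine ⟨!![a, -s, 0; g * b, r * b, -q; g * c, r * c, p], ?_, ?_⟩
  · simp only [det_fin_three, of_apply, cons_val', cons_val_zero, cons_val_one, cons_val,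
      cons_val_fin_one]
    linear_combination (a * r + s * g) * hpq + hrs
  · ext i
    fin_cases i <;> rfl

end Conjugation

end Matrix

namespace Int

variable {ι : Type*} [Fintype ι] [DecidableEq ι]

lemma exists_gcd_eq_one_mulVec_eq_smul {M : Matrix ι ι ℤ} {μ : ℤ} (hμ : M.charpoly.IsRoot μ) :
    ∃ v : ι → ℤ, Finset.univ.gcd v = 1 ∧ M *ᵥ v = μ • v := by
  obtain ⟨u, hu0, hu⟩ := exists_mulVec_eq_zero_iff.mpr (by rwa [IsRoot, eval_charpoly] at hμ)
  have hMu : M *ᵥ u = μ • u := by simpa [sub_mulVec, sub_eq_zero, eq_comm] using hu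
  obtain ⟨i, hi⟩ := Function.ne_iff.mp hu0
  obtain ⟨v, huv, hv⟩ := Finset.extract_gcd u ⟨i, Finset.mem_univ i⟩
  set d := Finset.univ.gcd u
  have hd : d ≠ 0 := fun h => hi (Finset.gcd_eq_zero_iff.mp h i (Finset.mem_univ i))
  have hdecomp : u = d • v := funext fun k => huv k (Finset.mem_univ k)
  refine ⟨v, hv, smul_right_injective _ hd (show d • (M *ᵥ v) = d • (μ • v) from ?_)⟩
  rw [← mulVec_smul, ← hdecomp, hMu, hdecomp, smul_comm]

lemma exists_det_eq_one_col_zero_fin_two {w : Fin 2 → ℤ} (hw : Finset.univ.gcd w = 1) :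
    ∃ U : Matrix (Fin 2) (Fin 2) ℤ, U.det = 1 ∧ U.col 0 = w := by
  have hw' : IsCoprime (w 0) (w 1) := by
    rw [← gcd_isUnit_iff, ← normalize_eq_one, normalize_gcd]
    simpa [Fin.univ_succ, (normalize_associated _).gcd_eq_right] using hw
  obtain ⟨U, hU, hcol⟩ := Matrix.exists_det_eq_one_col_zero_fin_two hw'
  refine ⟨U, hU, hcol.trans ?_⟩
  ext i
  fin_cases i <;> rfl

lemma exists_det_eq_one_col_zero_fin_three {w : Fin 3 → ℤ} (hw : Finset.univ.gcd w = 1) :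
    ∃ U : Matrix (Fin 3) (Fin 3) ℤ, U.det = 1 ∧ U.col 0 = w := by
  obtain ⟨b, c, hb, hc, hbc⟩ := extract_gcd (w 1) (w 2)
  have hw' : IsCoprime (w 0) (GCDMonoid.gcd (w 1) (w 2)) := by
    rw [← gcd_isUnit_iff, ← normalize_eq_one, normalize_gcd]
    simpa [Fin.univ_succ, (normalize_associated _).gcd_eq_right] using hw
  obtain ⟨U, hU, hcol⟩ :=
    Matrix.exists_det_eq_one_col_zero_fin_three hw' ((gcd_isUnit_iff _ _).mp hbc)
  refine ⟨U, hU, hcol.trans ?_⟩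
  ext i
  fin_cases i
  exacts [rfl, hb.symm, hc.symm]

lemma exists_det_eq_one_col_inv_mul_mul {M : Matrix ι ι ℤ} {μ : ℤ} (hμ : M.charpoly.IsRoot μ)
    {j : ι} (hcompl : ∀ w : ι → ℤ, Finset.univ.gcd w = 1 →
      ∃ U : Matrix ι ι ℤ, U.det = 1 ∧ U.col j = w) :
    ∃ U : Matrix ι ι ℤ, U.det = 1 ∧ (U⁻¹ * M * U).col j = Pi.single j μ := by
  obtain ⟨w, hw, hMw⟩ := exists_gcd_eq_one_mulVec_eq_smul hμ
  obtain ⟨U, hU, rfl⟩ := hcompl w hw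
  exact ⟨U, hU, col_inv_mul_mul_of_mulVec_eq (by simp [hU]) hMw⟩

theorem exists_det_eq_one_isUpperTriangular_inv_mul_mul_fin_three
    {M : Matrix (Fin 3) (Fin 3) ℤ} {μ ν ρ : ℤ}
    (h : M.charpoly = (X - C μ) * ((X - C ν) * (X - C ρ))) :
    ∃ P : Matrix (Fin 3) (Fin 3) ℤ, P.det = 1 ∧ (P⁻¹ * M * P).IsUpperTriangular ∧
      (P⁻¹ * M * P).diag = ![μ, ν, ρ] := by
  obtain ⟨U, hU, hAcol⟩ := exists_det_eq_one_col_inv_mul_mul (M := M) (μ := μ) (j := 0)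
    (by rw [h]; simp) fun _ => exists_det_eq_one_col_zero_fin_three
  set A := U⁻¹ * M * U
  have hB : (A.submatrix Fin.succ Fin.succ).charpoly = (X - C ν) * (X - C ρ) := by
    have hA := charpoly_inv_mul_mul_s9 (U := U) (by simp [hU]) M
    rw [charpoly_eq_mul_charpoly_submatrix_succ hAcol, h] at hA
    exact mul_left_cancel₀ (X_sub_C_ne_zero μ) hA
  obtain ⟨V, hV, hCcol⟩ := exists_det_eq_one_col_inv_mul_mul
    (M := A.submatrix Fin.succ Fin.succ) (μ := ν) (j := 0)
    (by rw [hB]; simp) fun _ => exists_det_eq_one_col_zero_fin_two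
  set N := (U * oneBlockDiag V)⁻¹ * M * (U * oneBlockDiag V)
  have hN : N = oneBlockDiag V⁻¹ * A * oneBlockDiag V := by
    simp only [N, A, Matrix.mul_inv_rev, inv_oneBlockDiag (by simp [hV] : IsUnit V.det), mul_assoc]
  have hNtri : N.IsUpperTriangular := hN ▸ isUpperTriangular_oneBlockDiag_mul_mul _ _ hAcol
    (isUpperTriangular_of_col_zero hCcol fun i j hij =>
      absurd hij (by simp [Subsingleton.elim i j]))
  have h00 : N 0 0 = μ := by simpa [hN] using congrFun (col_zero_oneBlockDiag_mul_mul _ _ hAcol) 0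
  have h11 : N 1 1 = ν := by
    simpa [hN, ← submatrix_succ_oneBlockDiag_mul_mul] using congrFun hCcol 0
  have h22 : N 2 2 = ρ := by
    have hNchar := charpoly_inv_mul_mul_s9 (U := U * oneBlockDiag V) (by simp [hU, hV]) M
    rw [charpoly_of_isUpperTriangular _ hNtri, Fin.prod_univ_three, h00, h11, h, ← mul_assoc]
      at hNchar
    exact C_inj.mp (sub_right_injective
      (mul_left_cancel₀ (mul_ne_zero (X_sub_C_ne_zero μ) (X_sub_C_ne_zero ν)) hNchar))
  refine ⟨U * oneBlockDiag V, by simp [hU, hV], hNtri, ?_⟩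
  ext i
  fin_cases i
  exacts [h00, h11, h22]

end Int

theorem sl3_eigenvalues_one_negone_negone_conjugate_upper_triangular_general
    (M : Matrix (Fin 3) (Fin 3) ℤ)
    (h : M.charpoly = (X - 1) * (X + 1) ^ 2) :
    ∃ T : Matrix (Fin 3) (Fin 3) ℤ, T.det = 1 ∧
      (∀ i j : Fin 3, j < i → (T * M * T⁻¹) i j = 0) ∧
      (T * M * T⁻¹) 0 0 = 1 ∧ (T * M * T⁻¹) 1 1 = -1 ∧ (T * M * T⁻¹) 2 2 = -1 := by
  obtain ⟨P, hP, htri, hdiag⟩ :=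
    Int.exists_det_eq_one_isUpperTriangular_inv_mul_mul_fin_three (M := M) (μ := 1) (ν := -1)
      (ρ := -1) (by rw [h, map_neg, map_one, sub_neg_eq_add]; ring)
  refine ⟨P⁻¹, by simp [hP], ?_⟩
  rw [nonsing_inv_nonsing_inv P (by simp [hP])]
  exact ⟨htri, congrFun hdiag 0, congrFun hdiag 1, congrFun hdiag 2⟩

theorem sl3_eigenvalues_one_negone_negone_conjugate_upper_triangular
    (M : Matrix (Fin 3) (Fin 3) ℤ) (hdet : M.det = 1)
    (h : M.charpoly = (X - 1) * (X + 1) ^ 2) :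
    ∃ T : Matrix (Fin 3) (Fin 3) ℤ, T.det = 1 ∧
      (∀ i j : Fin 3, j < i → (T * M * T⁻¹) i j = 0) ∧
      (T * M * T⁻¹) 0 0 = 1 ∧ (T * M * T⁻¹) 1 1 = -1 ∧ (T * M * T⁻¹) 2 2 = -1 :=
  sl3_eigenvalues_one_negone_negone_conjugate_upper_triangular_general M h
end

section
/- The matrix [[1, a],[0, A]] ∈ SL(3,ℤ) with A ∈ SL(2,ℤ) is conjugate in SL(3,ℤ) to [[1, 0],[0, A']] for some A' ∈ SL(2,ℤ) if and only if the row vector a lies in the image of the map d ↦ d(A - I) on integer row vectors, up to conjugating A. -/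
/-!
Write `P = [[1, d], [0, D]]`. Since `P` is invertible, `P⁻¹ M P = [[1, 0], [0, A']]` amounts to
`M P = P [[1, 0], [0, A']]`, whose blocks say `d + a D = d A'` and `A D = D A'`. Multiplying the
first on the right by `D⁻¹` and using `A' = D⁻¹ A D` gives `a = (d D⁻¹)(A - 1)`. Conversely,
if `a = d (A - 1)` then `P = [[1, d], [0, 1]]` conjugates `M` to `[[1, 0], [0, A]]`.
-/

open Matrix

namespace Matrix

variable {R : Type*} {m n : Type*} [Fintype n]

theorem inv_mul_mul_eq_iff_mul_eq_mul [DecidableEq n] [CommRing R] {P M N : Matrix n n R}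
    (hP : IsUnit P.det) : P⁻¹ * M * P = N ↔ M * P = P * N := by
  have := P.invertibleOfIsUnitDet hP
  rw [Matrix.mul_assoc, inv_mul_eq_iff_eq_mul_of_invertible]

section OneZero

variable [Fintype m] [DecidableEq m]

theorem fromBlocks_one_zero_mul_fromBlocks_one_zero [Semiring R] (x y : Matrix m n R)
    (X Y : Matrix n n R) :
    fromBlocks (1 : Matrix m m R) x 0 X * fromBlocks (1 : Matrix m m R) y 0 Y =
      fromBlocks 1 (y + x * Y) 0 (X * Y) := by
  simp [fromBlocks_multiply]

theorem fromBlocks_one_zero_conj_eq_iff [DecidableEq n] [CommRing R] (a d : Matrix m n R)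
    {A D : Matrix n n R} (A' : Matrix n n R) (hD : IsUnit D.det) :
    (fromBlocks (1 : Matrix m m R) d 0 D)⁻¹ * fromBlocks (1 : Matrix m m R) a 0 A *
        fromBlocks (1 : Matrix m m R) d 0 D = fromBlocks 1 0 0 A' ↔
      d + a * D = d * A' ∧ A * D = D * A' := by
  rw [inv_mul_mul_eq_iff_mul_eq_mul (by rwa [det_fromBlocks_zero₂₁, det_one, one_mul]),
    fromBlocks_one_zero_mul_fromBlocks_one_zero, fromBlocks_one_zero_mul_fromBlocks_one_zero]
  simp [fromBlocks_inj]

end OneZero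

theorem eq_mul_sub_one_of_intertwine [DecidableEq n] [CommRing R] {a d : Matrix m n R}
    {A D A' : Matrix n n R} (hD : IsUnit D.det) (h₁ : d + a * D = d * A')
    (h₂ : A * D = D * A') : a = d * D⁻¹ * (A - 1) := by
  have hA' : D⁻¹ * A * D = A' := (inv_mul_mul_eq_iff_mul_eq_mul hD).2 h₂
  calc a = a * D * D⁻¹ := (mul_nonsing_inv_cancel_right D a hD).symm
    _ = (d * (D⁻¹ * A * D) - d) * D⁻¹ := by rw [hA', ← h₁, add_sub_cancel_left]
    _ = d * D⁻¹ * (A - 1) := by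
      rw [Matrix.sub_mul, ← Matrix.mul_assoc, ← Matrix.mul_assoc,
        mul_nonsing_inv_cancel_right D _ hD, Matrix.mul_sub, Matrix.mul_one]

end Matrix

theorem block_diagonalisable_iff_in_image (a : Matrix (Fin 1) (Fin 2) ℤ)
    (A : Matrix (Fin 2) (Fin 2) ℤ) (hA : A.det = 1) :
    (∃ d : Matrix (Fin 1) (Fin 2) ℤ, ∃ D : Matrix (Fin 2) (Fin 2) ℤ, D.det = 1 ∧
        ∃ A' : Matrix (Fin 2) (Fin 2) ℤ, A'.det = 1 ∧
          (Matrix.fromBlocks (1 : Matrix (Fin 1) (Fin 1) ℤ) d 0 D)⁻¹ *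
              Matrix.fromBlocks (1 : Matrix (Fin 1) (Fin 1) ℤ) a 0 A *
              Matrix.fromBlocks (1 : Matrix (Fin 1) (Fin 1) ℤ) d 0 D =
            Matrix.fromBlocks (1 : Matrix (Fin 1) (Fin 1) ℤ) 0 0 A') ↔
      ∃ d : Matrix (Fin 1) (Fin 2) ℤ, a = d * (A - 1) := by
  constructor
  · rintro ⟨d, D, hD, A', -, h⟩
    have hDu : IsUnit D.det := hD ▸ isUnit_one
    obtain ⟨h₁, h₂⟩ := (fromBlocks_one_zero_conj_eq_iff a d A' hDu).1 h
    exact ⟨d * D⁻¹, eq_mul_sub_one_of_intertwine hDu h₁ h₂⟩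
  · rintro ⟨d, rfl⟩
    refine ⟨d, 1, det_one, A, hA, ?_⟩
    rw [fromBlocks_one_zero_conj_eq_iff _ _ _ (by rw [det_one]; exact isUnit_one)]
    simp [Matrix.mul_sub]
end

section
/- If M ∈ SL(2,ℤ) has a nonzero integer fixed vector (M μ = μ with μ ≠ 0), then M is conjugate in SL(2,ℤ) to [[1, m],[0, 1]] for some m ∈ ℤ, and the conjugated fixed vector has second component 0. -/
/-!
Write `μ = g • (p, q)` with `g = gcd` and `p, q` coprime. A Bézout relation `u p + v q = 1` gives
`T = [[u, v], [-q, p]] ∈ SL(2, ℤ)` with `T μ = (g, 0)`. Then `N = T M T⁻¹` fixes `(g, 0)`, so its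
first column is `(1, 0)`, and `det N = 1` forces `N 1 1 = 1`.
-/

open Matrix

theorem Matrix.exists_det_eq_one_mulVec_eq_of_isCoprime {R : Type*} [CommRing R] {p q : R}
    (h : IsCoprime p q) : ∃ T : Matrix (Fin 2) (Fin 2) R, T.det = 1 ∧ T *ᵥ ![p, q] = ![1, 0] := by
  obtain ⟨u, v, huv⟩ := h
  refine ⟨!![u, v; -q, p], by simpa [det_fin_two_of] using huv, ?_⟩
  ext i
  fin_cases i <;> simp [mulVec, huv]
  ring

theorem Int.exists_det_eq_one_mulVec_eq_gcd (v : Fin 2 → ℤ) :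
    ∃ T : Matrix (Fin 2) (Fin 2) ℤ, T.det = 1 ∧ T *ᵥ v = ![(Int.gcd (v 0) (v 1) : ℤ), 0] := by
  rcases Nat.eq_zero_or_pos (Int.gcd (v 0) (v 1)) with hg | hg
  · obtain ⟨h0, h1⟩ := Int.gcd_eq_zero_iff.mp hg
    refine ⟨1, det_one, ?_⟩
    ext i
    fin_cases i <;> simp [h0, h1]
  obtain ⟨p, q, hpq, hp, hq⟩ := Int.exists_gcd_one hg
  obtain ⟨T, hT, hTpq⟩ :=
    exists_det_eq_one_mulVec_eq_of_isCoprime (Int.isCoprime_iff_gcd_eq_one.mpr hpq)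
  have hv : v = (Int.gcd (v 0) (v 1) : ℤ) • ![p, q] := by
    ext i
    fin_cases i <;> simp [← hp, ← hq, mul_comm]
  refine ⟨T, hT, ?_⟩
  conv_lhs => rw [hv, mulVec_smul, hTpq]
  ext i
  fin_cases i <;> simp

theorem Matrix.eq_unipotent_of_mulVec_eq_self {R : Type*} [CommRing R] [NoZeroDivisors R]
    {N : Matrix (Fin 2) (Fin 2) R} (hdet : N.det = 1) {g : R} (hg : g ≠ 0)
    (hN : N *ᵥ ![g, 0] = ![g, 0]) : N = !![1, N 0 1; 0, 1] := by
  have h0 : N 0 0 * g = 1 * g := by simpa [mulVec, vecHead] using congrFun hN 0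
  have h1 : N 1 0 * g = 0 * g := by simpa [mulVec, vecHead] using congrFun hN 1
  have h00 := mul_right_cancel₀ hg h0
  have h10 := mul_right_cancel₀ hg h1
  have h11 : N 1 1 = 1 := by simpa [det_fin_two, h00, h10] using hdet
  ext i j
  fin_cases i <;> fin_cases j <;> simp [h00, h10, h11]

theorem sl2_fixed_vector_normal_form (M : Matrix (Fin 2) (Fin 2) ℤ) (hdet : M.det = 1)
    (μ : Fin 2 → ℤ) (hμ : μ ≠ 0) (hMμ : M.mulVec μ = μ) :
    ∃ T : Matrix (Fin 2) (Fin 2) ℤ, T.det = 1 ∧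
      (∃ m : ℤ, T * M * T⁻¹ = !![1, m; 0, 1]) ∧ T.mulVec μ 1 = 0 := by
  obtain ⟨T, hT, hTμ⟩ := Int.exists_det_eq_one_mulVec_eq_gcd μ
  have hTdet : IsUnit T.det := hT ▸ isUnit_one
  have hg : (Int.gcd (μ 0) (μ 1) : ℤ) ≠ 0 := by
    refine Int.natCast_ne_zero.mpr fun hg => hμ ?_
    obtain ⟨h0, h1⟩ := Int.gcd_eq_zero_iff.mp hg
    ext i
    fin_cases i <;> simp [h0, h1]
  have hfix : (T * M * T⁻¹) *ᵥ (T *ᵥ μ) = T *ᵥ μ := by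
    rw [mulVec_mulVec, mul_assoc, nonsing_inv_mul _ hTdet, mul_one, ← mulVec_mulVec, hMμ]
  rw [hTμ] at hfix
  refine ⟨T, hT, ⟨_, eq_unipotent_of_mulVec_eq_self ?_ hg hfix⟩, by simp [hTμ]⟩
  rw [det_conj ((isUnit_iff_isUnit_det T).mpr hTdet), hdet]
end

section
/- If M ∈ SL(3,ℤ) has characteristic polynomial (x-1)³ and the eigenspace of eigenvalue 1 has dimension 2 (geometric multiplicity 2 over ℚ), then M is conjugate in SL(3,ℤ) to a matrix with exactly one possibly-nonzero off-diagonal entry: [[1, 0, m],[0, 1, 0],[0, 0, 1]] for some m ∈ ℤ (after a suitable choice of which entry). -/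
/-!
`N = M - 1` is nilpotent by Cayley–Hamilton, and its image is a lattice of rank at most one.
A Smith normal form basis for that lattice is a basis of `ℤ³` in which `N` has a single nonzero
row; nilpotency kills the diagonal entry of that row, so `M` is conjugate to
`[[1, a, b], [0, 1, 0], [0, 0, 1]]`. A unimodular change of the last two basis vectors turns
`(a, b)` into `(0, gcd a b)`, and rescaling one basis vector by the inverse of the determinant
of the conjugator moves it into `SL(3, ℤ)`.
-/

open Polynomial Module Matrix

section PID

variable {R : Type*} [CommRing R] [IsDomain R] [IsPrincipalIdealRing R]

theorem Matrix.rank_le_rank_map_algebraMap (K : Type*) [Field K] [Algebra R K]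
    [IsFractionRing R K] {m n : Type*} [Finite m] [Fintype n] (A : Matrix m n R) :
    A.rank ≤ (A.map (algebraMap R K)).rank := by
  classical
  obtain ⟨k, b⟩ := (LinearMap.range A.mulVecLin).basisOfPid (Pi.basisFun R m)
  let u : Fin k → m → K := fun i => algebraMap R K ∘ (b i : m → R)
  have hu : LinearIndependent K u := by
    rw [← LinearIndependent.iff_fractionRing R K]
    exact b.linearIndependent.map'
      ((LinearMap.compLeft (Algebra.linearMap R K) m).comp (Submodule.subtype _))
      (LinearMap.ker_eq_bot.mpr
        ((IsFractionRing.injective R K).comp_left.comp Subtype.val_injective))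
  have hspan : Submodule.span K (Set.range u) ≤
      LinearMap.range (A.map (algebraMap R K)).mulVecLin := by
    rw [Submodule.span_le]
    rintro _ ⟨i, rfl⟩
    obtain ⟨y, hy⟩ := (b i).2
    refine ⟨algebraMap R K ∘ y, ?_⟩
    ext j
    simp [u, ← hy, RingHom.map_mulVec]
  calc A.rank = Fintype.card (Fin k) := finrank_eq_card_basis b
    _ = finrank K (Submodule.span K (Set.range u)) := (finrank_span_eq_card hu).symm
    _ ≤ _ := Submodule.finrank_mono hspan

theorem Submodule.exists_basis_le_ker_coord_of_finrank_le_one {M ι : Type*} [AddCommGroup M]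
    [Module R M] [Finite ι] [DecidableEq ι] (e : Basis ι R M) (L : Submodule R M)
    (hL : finrank R L ≤ 1) (i₀ : ι) :
    ∃ b : Basis ι R M, ∀ i ≠ i₀, L ≤ LinearMap.ker (b.coord i) := by
  obtain ⟨n, snf⟩ := L.smithNormalForm e
  have hn : n ≤ 1 := by simpa [finrank_eq_card_basis snf.bN] using hL
  obtain ⟨k, hk⟩ : ∃ k, ∀ j, snf.f j = k := by
    rcases Nat.eq_zero_or_pos n with rfl | hpos
    · exact ⟨i₀, fun j => j.elim0⟩
    · exact ⟨snf.f ⟨0, hpos⟩, fun j => congrArg snf.f (Fin.ext (by omega))⟩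
  refine ⟨snf.bM.reindex (Equiv.swap k i₀), fun i hi x hx => ?_⟩
  have hki : Equiv.swap k i₀ i ∉ Set.range snf.f := by
    rintro ⟨j, hj⟩
    rw [hk j, eq_comm, Equiv.swap_apply_eq_iff, Equiv.swap_apply_left] at hj
    exact hi hj
  simpa [Basis.repr_reindex_apply] using snf.le_ker_coord_of_notMem_range hki hx

theorem Matrix.exists_isConj_forall_ne_eq_zero_of_rank_le_one {ι : Type*} [Fintype ι]
    [DecidableEq ι] (A : Matrix ι ι R) (hA : A.rank ≤ 1) (i₀ : ι) :
    ∃ B, IsConj A B ∧ ∀ i ≠ i₀, B i = 0 := by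
  let e := Pi.basisFun R ι
  obtain ⟨b, hb⟩ :=
    (LinearMap.range A.mulVecLin).exists_basis_le_ker_coord_of_finrank_le_one e hA i₀
  have hPQ := b.toMatrix_mul_toMatrix_flip e
  have hQP := e.toMatrix_mul_toMatrix_flip b
  refine ⟨b.toMatrix e * A * e.toMatrix b, ⟨⟨_, _, hPQ, hQP⟩, ?_⟩, fun i hi => ?_⟩
  · simp only [SemiconjBy, mul_assoc, hQP, mul_one]
  have hrow : (b.toMatrix e * A) i = 0 := by
    ext j
    rw [basis_toMatrix_basisFun_mul]
    exact hb i hi ⟨Pi.single j 1, A.mulVec_single_one j⟩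
  ext j
  rw [Matrix.mul_apply]
  simp [hrow]

end PID

theorem IsConj.isNilpotent {α : Type*} [MonoidWithZero α] {a b : α} (h : IsConj a b)
    (ha : IsNilpotent a) : IsNilpotent b := by
  obtain ⟨k, hk⟩ := ha
  obtain ⟨c, hc⟩ := h.pow k
  refine ⟨k, ?_⟩
  rw [SemiconjBy, hk, mul_zero, eq_comm] at hc
  exact (Units.mul_left_eq_zero c).mp hc

section SingleRow

variable {R ι : Type*} [Fintype ι] [DecidableEq ι] {A : Matrix ι ι R} {i₀ : ι}

theorem Matrix.pow_apply_self_of_forall_ne_eq_zero [Semiring R] (hA : ∀ i ≠ i₀, A i = 0)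
    (k : ℕ) : (A ^ k) i₀ i₀ = A i₀ i₀ ^ k := by
  induction k with
  | zero => simp
  | succ k ih =>
    rw [pow_succ, pow_succ, mul_apply, Finset.sum_eq_single i₀ (fun j _ hj => by simp [hA j hj])
      (by simp), ih]

theorem Matrix.apply_self_eq_zero_of_isNilpotent [CommRing R] [IsReduced R]
    (hA : ∀ i ≠ i₀, A i = 0) (hnil : IsNilpotent A) : A i₀ i₀ = 0 := by
  obtain ⟨k, hk⟩ := hnil
  exact IsReduced.eq_zero _ ⟨k, by rw [← pow_apply_self_of_forall_ne_eq_zero hA, hk, zero_apply]⟩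

end SingleRow

section Euclidean

variable {R : Type*} [EuclideanDomain R] [DecidableEq R]

theorem EuclideanDomain.exists_det_eq_one_vecMul_eq_gcd (a b : R) :
    ∃ U : Matrix (Fin 2) (Fin 2) R, U.det = 1 ∧ ![a, b] ᵥ* U = ![0, gcd a b] := by
  by_cases hg : gcd a b = 0
  · obtain ⟨rfl, rfl⟩ := EuclideanDomain.gcd_eq_zero_iff.mp hg
    exact ⟨1, det_one, by simp⟩
  obtain ⟨a', ha'⟩ := gcd_dvd_left a b
  obtain ⟨b', hb'⟩ := gcd_dvd_right a b
  have hbez := gcd_eq_gcd_ab a b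
  refine ⟨!![b', gcdA a b; -a', gcdB a b], ?_, ?_⟩
  · rw [det_fin_two_of]
    refine mul_left_cancel₀ hg ?_
    linear_combination -hbez - gcdA a b * ha' - gcdB a b * hb'
  · have hmul : ![a, b] ᵥ* !![b', gcdA a b; -a', gcdB a b] =
        ![a * b' + b * -a', a * gcdA a b + b * gcdB a b] := by
      ext i
      fin_cases i <;> simp [vecMul]
    rw [hmul]
    exact vec2_eq (by linear_combination b' * ha' - a' * hb') hbez.symm

theorem Matrix.isConj_unitriangular_transvection_gcd (a b : R) :
    IsConj !![1, a, b; 0, 1, 0; 0, 0, 1] (transvection 0 2 (EuclideanDomain.gcd a b)) := by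
  obtain ⟨U, hdet, hU⟩ := EuclideanDomain.exists_det_eq_one_vecMul_eq_gcd a b
  have h0 : a * U 0 0 + b * U 1 0 = 0 := by simpa [vecMul, dotProduct] using congrFun hU 0
  have h1 : a * U 0 1 + b * U 1 1 = EuclideanDomain.gcd a b := by
    simpa [vecMul, dotProduct] using congrFun hU 1
  let V : Matrix (Fin 3) (Fin 3) R := !![1, 0, 0; 0, U 0 0, U 0 1; 0, U 1 0, U 1 1]
  have hV : IsUnit V := by
    rw [isUnit_iff_isUnit_det, show V.det = U.det by simp [V, det_fin_three, det_fin_two], hdet]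
    exact isUnit_one
  refine IsConj.symm ⟨hV.unit, ?_⟩
  ext i j
  fin_cases i <;> fin_cases j <;> simp [V, transvection, mul_apply, Fin.sum_univ_three, h0, h1]

end Euclidean

section Transvection

variable {R ι : Type*} [CommRing R] [Fintype ι] [DecidableEq ι] {i j : ι}

theorem Matrix.diagonal_update_one_mul_transvection (hij : i ≠ j) (v m : R) :
    diagonal (Function.update 1 j v) * transvection i j (m * v) =
      transvection i j m * diagonal (Function.update 1 j v) := by
  ext a b
  rw [diagonal_mul, mul_diagonal]
  simp only [transvection, add_apply, one_apply, single_apply, Function.update_apply,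
    Pi.one_apply]
  split_ifs <;> subst_vars <;> simp_all

theorem Matrix.exists_det_eq_one_mul_mul_inv_eq_transvection (hij : i ≠ j) {M : Matrix ι ι R}
    {m : R} (h : IsConj M (transvection i j m)) :
    ∃ T : Matrix ι ι R, T.det = 1 ∧ ∃ m', T * M * T⁻¹ = transvection i j m' := by
  obtain ⟨c, hc⟩ := h
  obtain ⟨u, hu⟩ := (isUnit_iff_isUnit_det _).mp c.isUnit
  let D : Matrix ι ι R := diagonal (Function.update 1 j ↑u⁻¹)
  have hD : D * transvection i j m = transvection i j (m * u) * D := by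
    simpa using diagonal_update_one_mul_transvection hij ↑u⁻¹ (m * u)
  have hT : (D * c).det = 1 := by
    simp [D, det_mul, det_diagonal, ← hu, Finset.prod_update_of_mem (Finset.mem_univ j)]
  have hTM : D * c * M = transvection i j (m * u) * (D * c) := by
    rw [mul_assoc D, hc.eq, ← mul_assoc, hD, mul_assoc]
  refine ⟨D * c, hT, m * u, ?_⟩
  rw [hTM, mul_nonsing_inv_cancel_right _ _ (by rw [hT]; exact isUnit_one)]

end Transvection

theorem sl3_unipotent_geometric_multiplicity_two_normal_form_general
    (M : Matrix (Fin 3) (Fin 3) ℤ)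
    (hchar : M.charpoly = (X - 1) ^ 3)
    (hrank : ((M - 1).map (Int.castRingHom ℚ)).rank = 1) :
    ∃ T : Matrix (Fin 3) (Fin 3) ℤ, T.det = 1 ∧
      ∃ m : ℤ, T * M * T⁻¹ = !![1, 0, m; 0, 1, 0; 0, 0, 1] := by
  have hnil : IsNilpotent (M - 1) := ⟨3, by simpa [hchar] using aeval_self_charpoly M⟩
  have hrankℤ : (M - 1).rank ≤ 1 := by
    have := (M - 1).rank_le_rank_map_algebraMap ℚ
    rwa [algebraMap_int_eq, hrank] at this
  obtain ⟨B, hNB, hB⟩ := (M - 1).exists_isConj_forall_ne_eq_zero_of_rank_le_one hrankℤ 0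
  have hB₀₀ : B 0 0 = 0 := apply_self_eq_zero_of_isNilpotent hB (hNB.isNilpotent hnil)
  have hB₁ : B + 1 = !![1, B 0 1, B 0 2; 0, 1, 0; 0, 0, 1] := by
    ext i j
    fin_cases i <;> fin_cases j <;> simp [hB₀₀, hB 1 (by decide), hB 2 (by decide)]
  have hMB : IsConj M !![1, B 0 1, B 0 2; 0, 1, 0; 0, 0, 1] := by
    obtain ⟨c, hc⟩ := hNB
    exact ⟨c, sub_add_cancel M 1 ▸ hB₁ ▸ hc.add_right (.one_right _)⟩
  obtain ⟨T, hT, m, hm⟩ := exists_det_eq_one_mul_mul_inv_eq_transvection (by decide)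
    (hMB.trans (isConj_unitriangular_transvection_gcd _ _))
  refine ⟨T, hT, m, hm.trans ?_⟩
  ext i j
  fin_cases i <;> fin_cases j <;> simp [transvection]

theorem sl3_unipotent_geometric_multiplicity_two_normal_form
    (M : Matrix (Fin 3) (Fin 3) ℤ) (hdet : M.det = 1)
    (hchar : M.charpoly = (X - 1) ^ 3)
    (hrank : ((M - 1).map (Int.castRingHom ℚ)).rank = 1) :
    ∃ T : Matrix (Fin 3) (Fin 3) ℤ, T.det = 1 ∧
      ∃ m : ℤ, T * M * T⁻¹ = !![1, 0, m; 0, 1, 0; 0, 0, 1] :=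
  sl3_unipotent_geometric_multiplicity_two_normal_form_general M hchar hrank
end
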